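/- For every finitely generated A-module M and every integer i ≥ 1, the A-module Ext^i_A(M, A) is a torsion module, i.e. every element of Ext^i_A(M, A) is annihilated by some nonzero element of A. -/

import Mathlib

/-!
Over a domain `A`, a finitely generated module `M` contains a free submodule `F` with
`a • M ⊆ F` for some `a ≠ 0`: take the span of a maximal linearly independent subset of a finite
generating set. Multiplication by `a` on `M` therefore factors through the projective module `F`.
The functors `Ext^(n+1)(-, Y)` are `A`-linear and vanish on projectives, so `a` kills
`Ext^(n+1)(M, Y)`.
-/

open CategoryTheory

/-- `Ext^i_A(M, A)` as a module over `A`, defined via the derived functor `Ext` of Mathlib. -/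
noncomputable def extModule (A : Type) [CommRing A] (M : Type) [AddCommGroup M] [Module A M]
    (i : ℕ) : ModuleCat A :=
  ((Ext A (ModuleCat A) i).obj (Opposite.op (ModuleCat.of A M))).obj (ModuleCat.of A A)

open Opposite Set Submodule

namespace CategoryTheory

section Opposite

variable {R : Type*} [Semiring R] {C : Type*} [Category C] [Preadditive C] [Linear R C]

instance Linear.opposite : Linear R Cᵒᵖ where
  homModule X Y := Equiv.module R (opEquiv X Y)
  smul_comp _ _ _ r f g := Quiver.Hom.unop_inj (Linear.comp_smul _ _ _ g.unop r f.unop)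
  comp_smul _ _ _ f r g := Quiver.Hom.unop_inj (Linear.smul_comp _ _ _ r g.unop f.unop)

instance {D : Type*} [Category D] [Preadditive D] [Linear R D] (F : Cᵒᵖ ⥤ D) [F.Additive]
    [F.Linear R] : F.rightOp.Linear R where
  map_smul f r := congrArg Quiver.Hom.op (F.map_smul r f.op)

end Opposite

instance {R : Type*} [CommRing R] {C : Type*} [Category C] [Preadditive C] [Linear R C] (Y : C) :
    ((linearYoneda R C).obj Y).Linear R where
  map_smul f r := by
    ext φ
    exact Linear.smul_comp _ _ _ r f.unop φ

end CategoryTheory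

instance HomologicalComplex.homologyFunctor_linear {R : Type*} [Semiring R] {C ι : Type*}
    [Category C] [Preadditive C] [Linear R C] [CategoryWithHomology C] (c : ComplexShape ι)
    (i : ι) : (HomologicalComplex.homologyFunctor C c i).Linear R where
  map_smul φ r :=
    ShortComplex.homologyMap_smul ((HomologicalComplex.shortComplexFunctor C c i).map φ) r

namespace CategoryTheory.Functor

variable {R : Type*} [Semiring R] {C D : Type*} [Category C] [Abelian C]
  [HasProjectiveResolutions C] [CategoryTheory.Linear R C] [Category D] [Abelian D]
  [CategoryTheory.Linear R D]

theorem leftDerived_map_smul (F : C ⥤ D) [F.Additive] [F.Linear R] (n : ℕ) {X Y : C} (r : R)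
    (f : X ⟶ Y) : (F.leftDerived n).map (r • f) = r • (F.leftDerived n).map f := by
  let P := projectiveResolution X
  let Q := projectiveResolution Y
  let g := ProjectiveResolution.lift f P Q
  have hg : g.f 0 ≫ Q.π.f 0 = P.π.f 0 ≫ f := ProjectiveResolution.lift_commutes_zero f P Q
  have hrg : (r • g).f 0 ≫ Q.π.f 0 = P.π.f 0 ≫ (r • f) := by
    rw [HomologicalComplex.smul_f_apply, Linear.smul_comp, hg]
    exact (Linear.comp_smul _ _ _ _ _ _).symm
  rw [← cancel_mono (Q.isoLeftDerivedObj F n).hom, Linear.smul_comp,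
    P.isoLeftDerivedObj_hom_naturality f Q g hg, P.isoLeftDerivedObj_hom_naturality _ Q _ hrg,
    Functor.map_smul, Linear.comp_smul]

theorem leftDerived_succ_map_comp_eq_zero_of_projective (F : C ⥤ D) [F.Additive] (n : ℕ)
    {X Y P : C} [Projective P] (g : X ⟶ P) (h : P ⟶ Y) :
    (F.leftDerived (n + 1)).map (g ≫ h) = 0 := by
  rw [(F.leftDerived (n + 1)).map_comp, (F.isZero_leftDerived_obj_projective_succ n P).eq_of_src
    ((F.leftDerived (n + 1)).map h) 0, Limits.comp_zero]

end CategoryTheory.Functor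

theorem Ext_succ_smul_eq_zero_of_comp_eq_smul_id {R : Type*} [CommRing R] {C : Type*}
    [Category C] [Abelian C] [Linear R C] [EnoughProjectives C] {X P : C} [Projective P] (r : R)
    (g : X ⟶ P) (h : P ⟶ X) (hgh : g ≫ h = r • 𝟙 X) (n : ℕ) {Y : C}
    (x : ((Ext R C (n + 1)).obj (op X)).obj Y) : r • x = 0 := by
  let F := ((linearYoneda R C).obj Y).rightOp
  have hzero : r • 𝟙 ((F.leftDerived (n + 1)).obj X) = 0 := by
    rw [← (F.leftDerived (n + 1)).map_id, ← F.leftDerived_map_smul, ← hgh,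
      F.leftDerived_succ_map_comp_eq_zero_of_projective]
  exact congrArg (fun φ => φ.unop.hom x) hzero

theorem Submodule.exists_smul_mem_of_span_eq_top {R M : Type*} [CommSemiring R] [Nontrivial R]
    [NoZeroDivisors R] [AddCommMonoid M] [Module R M] {ι : Type*} [Fintype ι] {s : ι → M}
    (hs : span R (range s) = ⊤) {N : Submodule R M} (h : ∀ i, ∃ a : R, a ≠ 0 ∧ a • s i ∈ N) :
    ∃ a : R, a ≠ 0 ∧ ∀ m : M, a • m ∈ N := by
  classical
  choose c hc0 hcN using h
  refine ⟨∏ i, c i, Finset.prod_ne_zero_iff.2 fun i _ => hc0 i, fun m => ?_⟩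
  have hle : span R (range s) ≤ N.comap (LinearMap.lsmul R M (∏ i, c i)) := by
    rw [span_le]
    rintro _ ⟨i, rfl⟩
    rw [SetLike.mem_coe, mem_comap, LinearMap.lsmul_apply, Fintype.prod_eq_prod_compl_mul i,
      mul_smul]
    exact N.smul_mem _ (hcN i)
  exact hle (hs ▸ mem_top)

theorem Module.Finite.exists_smul_mem_free_submodule {R M : Type*} [CommRing R] [IsDomain R]
    [AddCommGroup M] [Module R M] [Module.Finite R M] :
    ∃ a : R, a ≠ 0 ∧ ∃ F : Submodule R M, Module.Free R F ∧ ∀ m : M, a • m ∈ F := by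
  obtain ⟨n, s, hs⟩ := Module.Finite.exists_fin (R := R) (M := M)
  obtain ⟨I, hI, hmax⟩ := exists_maximal_linearIndepOn R s
  have hfree : Module.Free R (span R (s '' I)) := by
    rw [image_eq_range]
    exact Module.Free.of_basis (Module.Basis.span hI)
  refine (exists_smul_mem_of_span_eq_top hs fun i => ?_).imp fun a ⟨ha, hmem⟩ =>
    ⟨ha, _, hfree, hmem⟩
  by_cases hi : i ∈ I
  · exact ⟨1, one_ne_zero, (one_smul R (s i)).symm ▸ subset_span (mem_image_of_mem s hi)⟩
  · exact hmax i hi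

theorem ext_isTorsion_general (k : Type) [Field k] (n : ℕ)
    (M : Type) [AddCommGroup M] [Module (MvPolynomial (Fin n) k) M]
    [Module.Finite (MvPolynomial (Fin n) k) M]
    (i : ℕ) (hi : 1 ≤ i) :
    ∀ x : extModule (MvPolynomial (Fin n) k) M i,
      ∃ a : MvPolynomial (Fin n) k, a ≠ 0 ∧ a • x = 0 := by
  intro x
  obtain ⟨a, ha, F, _, haF⟩ :=
    Module.Finite.exists_smul_mem_free_submodule (R := MvPolynomial (Fin n) k) (M := M)
  obtain ⟨m, rfl⟩ := Nat.exists_eq_add_of_le' hi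
  let g : ModuleCat.of _ M ⟶ ModuleCat.of _ F :=
    ModuleCat.ofHom ((LinearMap.lsmul _ M a).codRestrict F haF)
  refine ⟨a, ha, Ext_succ_smul_eq_zero_of_comp_eq_smul_id a g (ModuleCat.ofHom F.subtype) ?_ m x⟩
  ext
  rfl

/-- For `A = k[x_1, …, x_n]` with `k` a field and `n ≥ 1`, and `M` a finitely generated
`A`-module, the module `Ext^i_A(M, A)` is a torsion module for every `i ≥ 1`:
every element is annihilated by some nonzero element of `A`. -/
theorem ext_isTorsion (k : Type) [Field k] (n : ℕ) (hn : 1 ≤ n)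
    (M : Type) [AddCommGroup M] [Module (MvPolynomial (Fin n) k) M]
    [Module.Finite (MvPolynomial (Fin n) k) M]
    (i : ℕ) (hi : 1 ≤ i) :
    ∀ x : extModule (MvPolynomial (Fin n) k) M i,
      ∃ a : MvPolynomial (Fin n) k, a ≠ 0 ∧ a • x = 0 :=
  ext_isTorsion_general k n M i hi
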